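/- arXiv:math/0509196 — 3 statements merged into one kernel-verified Lean document; each statement's English description precedes it below -/
import Mathlib

section
/- Let K be a number field, p a prime number, and f ∈ O_K[X] (resp. a polynomial in n variables with coefficients in the ring of integers O_K). Let ζ be an n-tuple of p-th roots of unity. Then the product ∏_{j=0}^{p-1} f(ζ^j · X) (where ζ^j · X denotes coordinatewise multiplication) has coefficients in O_K, and it is congruent modulo p·O_K[X] to f_p(X^p), where f_p is the polynomial obtained from f by raising each coefficient to the p-th power and X^p denotes the tuple (X_1^p, …, X_n^p). -/
/-!
Let `R = A[X_1, …, X_n]` and work in the group algebra `R[ZMod p]`, writing `T^k` for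
`single k 1`. Choose an additive character `ψ` of `ZMod p` and exponents `a_i` with
`ψ (a_i) = ζ_i`, and put `Ψ = ∏_{j : ZMod p} f(T^{j a_1} X_1, …, T^{j a_n} X_n) ∈ R[ZMod p]`.
Specialising `T ↦ ψ` gives `∏_j f(ζ^j X)`, specialising `T ↦ 1` gives `f^p`.
Since `Ψ` is invariant under `T^k ↦ T^{uk}` for `u ≠ 0`, all its coefficients `Ψ_k` with `k ≠ 0`
equal `Ψ_1`, so the two specialisations are `Ψ_0 + (∑ ψ - 1) Ψ_1` and `Ψ_0 + (p - 1) Ψ_1`.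
As `∑ ψ` is `0` or `p`, the first lies in `R` and is congruent to `f^p` modulo `p`, and
`f^p ≡ f_p(X^p)` modulo `p` by the freshman's dream.
-/

open MvPolynomial NumberField

lemma exists_sum_pow_prime_eq {R ι : Type*} [CommSemiring R] {p : ℕ} (hp : p.Prime)
    (s : Finset ι) (t : ι → R) :
    ∃ c, (∑ i ∈ s, t i) ^ p = ∑ i ∈ s, t i ^ p + p * c := by
  classical
  induction s using Finset.induction_on with
  | empty => exact ⟨0, by simp [zero_pow hp.ne_zero]⟩
  | insert x s hx ih =>
    obtain ⟨c, hc⟩ := ih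
    obtain ⟨r, hr⟩ := exists_add_pow_prime_eq hp (t x) (∑ i ∈ s, t i)
    refine ⟨t x * (∑ i ∈ s, t i) * r + c, ?_⟩
    rw [Finset.sum_insert hx, Finset.sum_insert hx, hr, hc]
    ring

lemma AddChar.exists_sum_eq_card_mul {G B : Type*} [AddGroup G] [Fintype G] [CommRing B]
    [IsDomain B] (ψ : AddChar G B) : ∃ m : ℤ, ∑ x, ψ x = Fintype.card G * m := by
  classical
  rw [AddChar.sum_eq_ite]
  split_ifs
  · exact ⟨1, by simp⟩
  · exact ⟨0, by simp⟩

lemma exists_addChar_zmod_apply_eq {σ B : Type*} [CommRing B] [IsDomain B] {p : ℕ}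
    [Fact p.Prime] (ζ : σ → B) (hζ : ∀ i, ζ i ^ p = 1) :
    ∃ (ψ : AddChar (ZMod p) B) (a : σ → ZMod p), ∀ i, ψ (a i) = ζ i := by
  by_cases htriv : ∀ i, ζ i = 1
  · exact ⟨1, 0, fun i => by simp [htriv i]⟩
  push Not at htriv
  obtain ⟨i₀, hi₀⟩ := htriv
  have hprim : IsPrimitiveRoot (ζ i₀) p :=
    orderOf_eq_prime (hζ i₀) hi₀ ▸ IsPrimitiveRoot.orderOf (ζ i₀)
  choose e _ he using fun i => hprim.eq_pow_of_pow_eq_one (hζ i)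
  exact ⟨AddChar.zmodChar p (hζ i₀), fun i => e i, fun i => by
    rw [AddChar.zmodChar_apply', he]⟩

lemma ZMod.prod_range_natCast {M : Type*} [CommMonoid M] (p : ℕ) [NeZero p] (H : ZMod p → M) :
    ∏ n ∈ Finset.range p, H n = ∏ j, H j := by
  refine Finset.prod_nbij (↑) (fun _ _ => Finset.mem_univ _) ?_ ?_ fun _ _ => rfl
  · intro m hm n hn h
    simpa [Nat.mod_eq_of_lt (Finset.mem_range.mp hm), Nat.mod_eq_of_lt (Finset.mem_range.mp hn)]
      using (ZMod.natCast_eq_natCast_iff' m n p).mp h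
  · intro j _
    exact ⟨j.val, Finset.mem_range.mpr (ZMod.val_lt j), ZMod.natCast_zmod_val j⟩

namespace MvPolynomial

lemma exists_pow_prime_eq {σ R : Type*} [CommSemiring R] {p : ℕ} (hp : p.Prime)
    (f : MvPolynomial σ R) :
    ∃ c, f ^ p = ∑ m ∈ f.support, monomial (p • m) (f.coeff m ^ p) + p * c := by
  obtain ⟨c, hc⟩ := exists_sum_pow_prime_eq hp f.support fun m => monomial m (f.coeff m)
  refine ⟨c, ?_⟩
  simp only [monomial_pow] at hc
  rwa [← f.as_sum] at hc

section GroupAlgebra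

variable {σ A B F : Type*} [CommRing A] [CommRing B] [Field F]

noncomputable def twist (a : σ → F) (j : F) :
    MvPolynomial σ A →ₐ[A] AddMonoidAlgebra (MvPolynomial σ A) F :=
  aeval fun i => AddMonoidAlgebra.single (j * a i) (X i)

lemma mapDomain_mulLeft_twist (a : σ → F) (u j : F) (f : MvPolynomial σ A) :
    AddMonoidAlgebra.mapDomainAlgHom A (MvPolynomial σ A) (AddMonoidHom.mulLeft u)
      (twist a j f) = twist a (u * j) f := by
  rw [← AlgHom.comp_apply, twist, twist, comp_aeval]
  congr 2
  ext i
  simp [mul_assoc]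

noncomputable def evalChar (φ : A →+* B) (ψ : AddChar F B) :
    AddMonoidAlgebra (MvPolynomial σ A) F →+* MvPolynomial σ B :=
  AddMonoidAlgebra.liftNCRingHom (map φ)
    ((C : B →+* MvPolynomial σ B).toMonoidHom.comp ψ.toMonoidHom) fun _ _ => Commute.all _ _

lemma evalChar_twist (φ : A →+* B) (ψ : AddChar F B) (a : σ → F) (j : F)
    (f : MvPolynomial σ A) :
    evalChar φ ψ (twist a j f) = bind₁ (fun i => C (ψ (j * a i)) * X i) (map φ f) := by
  rw [twist, ← AlgHom.coe_toRingHom, ← RingHom.comp_apply, ← AlgHom.coe_toRingHom,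
    ← RingHom.comp_apply]
  congr 1
  apply ringHom_ext
  · intro r
    simp [evalChar]
  · intro i
    simp [evalChar, mul_comm]

variable [Fintype F]

lemma evalChar_apply (φ : A →+* B) (ψ : AddChar F B)
    (x : AddMonoidAlgebra (MvPolynomial σ A) F) :
    evalChar φ ψ x = ∑ k, map φ (x.coeff k) * C (ψ k) := by
  conv_lhs => rw [← AddMonoidAlgebra.sum_coeff_single x]
  rw [map_finsuppSum, Finsupp.sum_fintype _ _ (by simp)]
  simp [evalChar]

noncomputable def twistProd (a : σ → F) (f : MvPolynomial σ A) :
    AddMonoidAlgebra (MvPolynomial σ A) F :=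
  ∏ j, twist a j f

lemma mapDomain_mulLeft_twistProd (a : σ → F) {u : F} (hu : u ≠ 0) (f : MvPolynomial σ A) :
    AddMonoidAlgebra.mapDomainAlgHom A (MvPolynomial σ A) (AddMonoidHom.mulLeft u)
      (twistProd a f) = twistProd a f := by
  rw [twistProd, map_prod]
  simp only [mapDomain_mulLeft_twist]
  exact Fintype.prod_equiv (Equiv.mulLeft₀ u hu) _ _ fun _ => rfl

lemma coeff_twistProd_of_ne_zero (a : σ → F) (f : MvPolynomial σ A) {k : F} (hk : k ≠ 0) :
    (twistProd a f).coeff k = (twistProd a f).coeff 1 := by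
  have h := congrArg (fun x => x.coeff (k * 1)) (mapDomain_mulLeft_twistProd a hk f)
  simp only [AddMonoidAlgebra.mapDomainAlgHom_apply, AddMonoidHom.coe_mulLeft,
    AddMonoidAlgebra.coeff_mapDomain, Finsupp.mapDomain_apply (mul_right_injective₀ hk)] at h
  rw [h, mul_one]

lemma evalChar_twistProd (φ : A →+* B) (ψ : AddChar F B) (a : σ → F) (f : MvPolynomial σ A) :
    evalChar φ ψ (twistProd a f) = map φ ((twistProd a f).coeff 0) +
      map φ ((twistProd a f).coeff 1) * C (∑ k, ψ k - 1) := by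
  classical
  rw [evalChar_apply, Fintype.sum_eq_add_sum_compl 0, Fintype.sum_eq_add_sum_compl 0 ψ,
    AddChar.map_zero_eq_one, map_one, mul_one, add_sub_cancel_left, map_sum, Finset.mul_sum]
  congr 1
  refine Finset.sum_congr rfl fun k hk => ?_
  rw [coeff_twistProd_of_ne_zero a f (by simpa using hk)]

lemma pow_card_eq_twistProd (a : σ → F) (f : MvPolynomial σ A) :
    f ^ Fintype.card F =
      (twistProd a f).coeff 0 + (Fintype.card F - 1) * (twistProd a f).coeff 1 := by
  calc f ^ Fintype.card F = evalChar (RingHom.id A) 1 (twistProd a f) := by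
        simp [twistProd, evalChar_twist, map_id]
    _ = _ := by simp [evalChar_twistProd, map_id, mul_comm]

end GroupAlgebra

theorem exists_map_eq_prod_bind₁_of_pow_eq_one {σ A B : Type*} [CommRing A] [CommRing B]
    [IsDomain B] (φ : A →+* B) {p : ℕ} (hp : p.Prime) (f : MvPolynomial σ A) (ζ : σ → B)
    (hζ : ∀ i, ζ i ^ p = 1) :
    ∃ g : MvPolynomial σ A,
      map φ g = ∏ j ∈ Finset.range p, bind₁ (fun i => C (ζ i ^ j) * X i) (map φ f) ∧
      ∃ h, g = f ^ p + p * h := by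
  have := Fact.mk hp
  obtain ⟨ψ, a, hψa⟩ := exists_addChar_zmod_apply_eq ζ hζ
  obtain ⟨m, hm⟩ := ψ.exists_sum_eq_card_mul
  have hpow := pow_card_eq_twistProd a f
  rw [ZMod.card] at hm hpow
  set c₀ := (twistProd a f).coeff 0
  set c₁ := (twistProd a f).coeff 1
  refine ⟨c₀ + (p * m - 1 : MvPolynomial σ A) * c₁, ?_, (m - 1) * c₁, by linear_combination -hpow⟩
  calc map φ (c₀ + (p * m - 1 : MvPolynomial σ A) * c₁) = evalChar φ ψ (twistProd a f) := by
        simp [evalChar_twistProd, hm, c₀, c₁, mul_comm]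
    _ = ∏ j : ZMod p, bind₁ (fun i => C (ψ (j * a i)) * X i) (map φ f) := by
        simp [twistProd, evalChar_twist]
    _ = _ := by
        rw [← ZMod.prod_range_natCast]
        refine Finset.prod_congr rfl fun n _ => ?_
        simp [← nsmul_eq_mul, AddChar.map_nsmul_eq_pow, hψa]

end MvPolynomial

theorem stmt0_general (K L : Type*) [Field K] [Field L]
    [Algebra K L] (n p : ℕ) (hp : p.Prime)
    (f : MvPolynomial (Fin n) (𝓞 K))
    (ζ : Fin n → 𝓞 L) (hζ : ∀ i, ζ i ^ p = 1) :
    ∃ g : MvPolynomial (Fin n) (𝓞 K),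
      MvPolynomial.map (algebraMap (𝓞 K) (𝓞 L)) g =
        ∏ j ∈ Finset.range p,
          MvPolynomial.bind₁ (fun i => C (ζ i ^ j) * X i)
            (MvPolynomial.map (algebraMap (𝓞 K) (𝓞 L)) f) ∧
      ∃ h : MvPolynomial (Fin n) (𝓞 K),
        g - (f.support.sum fun m => monomial (p • m) (f.coeff m ^ p)) = p • h := by
  obtain ⟨g, hg, h, rfl⟩ :=
    exists_map_eq_prod_bind₁_of_pow_eq_one (algebraMap (𝓞 K) (𝓞 L)) hp f ζ hζ
  obtain ⟨c, hc⟩ := f.exists_pow_prime_eq hp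
  exact ⟨_, hg, h + c, by rw [hc, nsmul_eq_mul]; ring⟩

/-- Let `K` be a number field, `p` a prime, `f` a polynomial in `n`
variables with coefficients in `𝓞 K`, and `ζ` an `n`-tuple of `p`-th roots of unity
(living in the ring of integers of an extension `L` of `K`).  Then the product
`∏_{j=0}^{p-1} f(ζ^j · X)` has coefficients in `𝓞 K`, and it is congruent modulo
`p · 𝓞 K[X]` to `f_p(X^p)`, where `f_p` is obtained from `f` by raising each
coefficient to the `p`-th power. -/
theorem stmt0 (K L : Type*) [Field K] [NumberField K] [Field L] [NumberField L]
    [Algebra K L] (n p : ℕ) (hp : p.Prime)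
    (f : MvPolynomial (Fin n) (𝓞 K))
    (ζ : Fin n → 𝓞 L) (hζ : ∀ i, ζ i ^ p = 1) :
    ∃ g : MvPolynomial (Fin n) (𝓞 K),
      MvPolynomial.map (algebraMap (𝓞 K) (𝓞 L)) g =
        ∏ j ∈ Finset.range p,
          MvPolynomial.bind₁ (fun i => C (ζ i ^ j) * X i)
            (MvPolynomial.map (algebraMap (𝓞 K) (𝓞 L)) f) ∧
      ∃ h : MvPolynomial (Fin n) (𝓞 K),
        g - (f.support.sum fun m => monomial (p • m) (f.coeff m ^ p)) = p • h :=
  stmt0_general K L n p hp f ζ hζ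
end

section
/- Let K be a number field with ring of integers O_K, and let v be a non-archimedean place of K. Given α_1, …, α_n ∈ K, there exists β ∈ O_K such that β·α_i ∈ O_K for all i, and |β|_v = max{1, |α_1|_v, …, |α_n|_v}^{-1}. -/
/-!
Clear denominators: `d • αᵢ ∈ 𝓞 K` for some `d ≠ 0`. Factor `(d) = vᶜ · J` with `v ∤ J` and pick
`z ∈ J \ v`. With `π` a uniformizer and `|αᵢ|_v ≤ |π|_v⁻ᵐ`, the element `β = πᵐ z` has
`|β|_v = |π|_vᵐ`, and `(d)` divides `β · dαᵢ`: the factor `J` divides `(z)`, and `vᶜ` divides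
`(πᵐ · dαᵢ)` because `|πᵐ · dαᵢ|_v ≤ |d|_v`.
-/

open NumberField IsDedekindDomain

open scoped nonZeroDivisors WithZero

theorem WithZero.exists_eq_exp_natCast_of_one_le {x : ℤᵐ⁰} (hx : 1 ≤ x) :
    ∃ m : ℕ, x = WithZero.exp (m : ℤ) := by
  lift x to ℤ using (zero_lt_one.trans_le hx).ne'
  rw [← WithZero.exp_zero, WithZero.exp_le_exp] at hx
  obtain ⟨m, rfl⟩ := Int.eq_ofNat_of_zero_le hx
  exact ⟨m, rfl⟩

namespace IsDedekindDomain.HeightOneSpectrum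

variable {R K : Type*} [CommRing R] [IsDedekindDomain R] [Field K] [Algebra R K]
  [IsFractionRing R K] (v : HeightOneSpectrum R)

theorem exists_intValuation_eq_exp_neg_and_mul_integral {ι : Type*} [Finite ι] (α : ι → K) (m : ℕ)
    (hα : ∀ i, v.valuation K (α i) ≤ WithZero.exp (m : ℤ)) :
    ∃ y : R, v.intValuation y = WithZero.exp (-(m : ℤ)) ∧
      ∀ i, ∃ γ : R, algebraMap R K y * α i = algebraMap R K γ := by
  obtain ⟨d, hd⟩ := IsLocalization.exist_integer_multiples_of_finite R⁰ α
  choose a ha using hd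
  have hd0 : (d : R) ≠ 0 := nonZeroDivisors.coe_ne_zero d
  obtain ⟨c, J, hvJ, hdJ⟩ := WfDvdMonoid.max_power_factor
    (Ideal.span_singleton_eq_bot.not.mpr hd0) v.irreducible
  obtain ⟨z, hzJ, hzv⟩ := SetLike.not_le_iff_exists.mp (mt Ideal.dvd_iff_le.mpr hvJ)
  obtain ⟨π, hπ⟩ := v.intValuation_exists_uniformizer
  have hπm : v.intValuation (π ^ m) = WithZero.exp (-(m : ℤ)) := by
    rw [map_pow, hπ, ← WithZero.exp_nsmul]; simp
  refine ⟨π ^ m * z, by rw [map_mul, hπm, intValuation_eq_one_iff.mpr hzv, mul_one], fun i => ?_⟩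
  have hvd : v.intValuation (d : R) ≤ WithZero.exp (-(c : ℤ)) :=
    (v.intValuation_le_pow_iff_dvd _ _).mpr (hdJ ▸ dvd_mul_right _ _)
  have hai : v.intValuation (a i) = v.intValuation (d : R) * v.valuation K (α i) := by
    simpa only [Algebra.smul_def, map_mul, valuation_of_algebraMap]
      using congrArg (v.valuation K) (ha i)
  have hαm : WithZero.exp (-(m : ℤ)) * v.valuation K (α i) ≤ 1 :=
    calc WithZero.exp (-(m : ℤ)) * v.valuation K (α i)
        ≤ WithZero.exp (-(m : ℤ)) * WithZero.exp (m : ℤ) := by gcongr; exact hα i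
      _ = 1 := by rw [← WithZero.exp_add, neg_add_cancel, WithZero.exp_zero]
  have hval : v.intValuation (π ^ m * a i) ≤ WithZero.exp (-(c : ℤ)) :=
    calc v.intValuation (π ^ m * a i)
        = v.intValuation (d : R) * (WithZero.exp (-(m : ℤ)) * v.valuation K (α i)) := by
          rw [map_mul, hπm, hai, mul_left_comm]
      _ ≤ v.intValuation (d : R) := mul_le_of_le_one_right' hαm
      _ ≤ WithZero.exp (-(c : ℤ)) := hvd
  have hdvd : Ideal.span {(d : R)} ∣ Ideal.span {π ^ m * z * a i} := by
    rw [hdJ, mul_right_comm, ← Ideal.span_singleton_mul_span_singleton]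
    exact mul_dvd_mul ((v.intValuation_le_pow_iff_dvd _ _).mp hval)
      (Ideal.dvd_span_singleton.mpr hzJ)
  obtain ⟨γ, hγ⟩ := Ideal.mem_span_singleton.mp (Ideal.dvd_span_singleton.mp hdvd)
  refine ⟨γ, mul_left_cancel₀ ((map_ne_zero_iff _ (IsFractionRing.injective R K)).mpr hd0) ?_⟩
  rw [← map_mul _ (d : R) γ, ← hγ, map_mul _ (π ^ m * z), ha i, Algebra.smul_def]
  ring

end IsDedekindDomain.HeightOneSpectrum

/-- Let `K` be a number field, `𝓞 K` its ring of integers, and `v` a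
non-archimedean place of `K` (a height-one prime of `𝓞 K` with its `v`-adic valuation).
Given `α₁, …, α_n ∈ K`, there is `β ∈ 𝓞 K` with `β·αᵢ ∈ 𝓞 K` for all `i` and
`|β|_v = max{1, |α₁|_v, …, |α_n|_v}⁻¹`. -/
theorem stmt8 (K : Type*) [Field K] [NumberField K] (n : ℕ) (α : Fin n → K)
    (v : HeightOneSpectrum (𝓞 K)) :
    ∃ β : 𝓞 K, (∀ i, ∃ γ : 𝓞 K, (β : K) * α i = (γ : K)) ∧
      v.valuation K (β : K) =
        ((Finset.univ.sup fun i => v.valuation K (α i)) ⊔ 1)⁻¹ := by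
  obtain ⟨m, hm⟩ := WithZero.exists_eq_exp_natCast_of_one_le
    (le_sup_right : 1 ≤ (Finset.univ.sup fun i => v.valuation K (α i)) ⊔ 1)
  obtain ⟨β, hβ, hβα⟩ := v.exists_intValuation_eq_exp_neg_and_mul_integral α m fun i =>
    hm ▸ le_sup_of_le_left (Finset.le_sup (f := fun i => v.valuation K (α i)) (Finset.mem_univ i))
  refine ⟨β, hβα, ?_⟩
  rw [hm, ← WithZero.exp_neg, ← hβ]
  exact v.valuation_of_algebraMap β
end

section
/- For positive integers L, T, Ω, n with L ≥ 2ΩT, one has the inequality (binom(L+n,n) − binom(L−ΩT+n,n)) / binom(L−ΩT+n,n) ≤ 2^{n+1}·ΩT/L. -/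
lemma aux_pow17 (n : ℕ) (x : ℝ) (hx : 0 ≤ x) (hx1 : x ≤ 1) :
    (1 + x) ^ n ≤ 1 + (2 ^ n - 1) * x := by
  induction n with
  | zero => simp
  | succ n ih =>
    have h2 : (1:ℝ) ≤ 2 ^ n := one_le_pow₀ (by norm_num)
    have key : (0:ℝ) ≤ ((2:ℝ)^n - 1) * (x * (1 - x)) :=
      mul_nonneg (by linarith) (mul_nonneg hx (by linarith))
    calc (1+x)^(n+1) = (1+x)^n * (1+x) := by ring
    _ ≤ (1 + (2^n - 1)*x) * (1+x) :=
        mul_le_mul_of_nonneg_right ih (by linarith)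
    _ ≤ 1 + (2^(n+1) - 1)*x := by
        have h3 : (2:ℝ)^(n+1) = 2 * 2^n := by ring
        nlinarith [key]

lemma aux_choose17 (K L : ℕ) (x : ℝ) (hx0 : 0 ≤ x)
    (hLK : (L:ℝ) ≤ (1+x) * K) :
    ∀ n : ℕ, (Nat.choose (L+n) n : ℝ) ≤ (1+x)^n * Nat.choose (K+n) n := by
  intro n
  induction n with
  | zero => simp
  | succ n ih =>
    have hnp : (0:ℝ) < (n:ℝ) + 1 := by positivity
    have e1 : ((L:ℝ)+n+1) * Nat.choose (L+n) n
        = (Nat.choose (L+n+1) (n+1) : ℝ) * (n+1) := by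
      have := Nat.add_one_mul_choose_eq (L+n) n
      exact_mod_cast congrArg (Nat.cast : ℕ → ℝ) this
    have e2 : ((K:ℝ)+n+1) * Nat.choose (K+n) n
        = (Nat.choose (K+n+1) (n+1) : ℝ) * (n+1) := by
      have := Nat.add_one_mul_choose_eq (K+n) n
      exact_mod_cast congrArg (Nat.cast : ℕ → ℝ) this
    have hfac : ((L:ℝ)+n+1) ≤ (1+x) * ((K:ℝ)+n+1) := by nlinarith [hx0, hnp]
    have key : ((L:ℝ)+n+1) * Nat.choose (L+n) n
        ≤ ((1+x) * ((K:ℝ)+n+1)) * ((1+x)^n * Nat.choose (K+n) n) := by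
      apply mul_le_mul hfac ih (by positivity)
      positivity
    have key2 : (Nat.choose (L+n+1) (n+1) : ℝ) * (n+1)
        ≤ ((1+x)^(n+1) * Nat.choose (K+n+1) (n+1)) * (n+1) := by
      rw [← e1]
      calc ((L:ℝ)+n+1) * Nat.choose (L+n) n
          ≤ ((1+x) * ((K:ℝ)+n+1)) * ((1+x)^n * Nat.choose (K+n) n) := key
        _ = (1+x)^(n+1) * (((K:ℝ)+n+1) * Nat.choose (K+n) n) := by ring
        _ = ((1+x)^(n+1) * Nat.choose (K+n+1) (n+1)) * (n+1) := by rw [e2]; ring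
    exact le_of_mul_le_mul_right key2 hnp

/-- For positive integers `L, T, Ω, n` with `L ≥ 2ΩT`, one has
`(binom(L+n,n) − binom(L−ΩT+n,n)) / binom(L−ΩT+n,n) ≤ 2^(n+1)·ΩT/L`. -/
theorem stmt17 (L T Ω n : ℕ) (hL : 0 < L) (hT : 0 < T) (hΩ : 0 < Ω) (hn : 0 < n)
    (h : 2 * Ω * T ≤ L) :
    ((Nat.choose (L + n) n : ℝ) - Nat.choose (L - Ω * T + n) n) /
        Nat.choose (L - Ω * T + n) n ≤
      2 ^ (n + 1) * Ω * T / L := by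
  set m := Ω * T with hm
  have hmpos : 0 < m := Nat.mul_pos hΩ hT
  have h2m : 2 * m ≤ L := by simpa [hm, mul_assoc] using h
  have hmL : m ≤ L := by omega
  have hLpos : (0:ℝ) < L := by exact_mod_cast hL
  have hmR : (0:ℝ) < m := by exact_mod_cast hmpos
  have h2mR : 2 * (m:ℝ) ≤ L := by exact_mod_cast h2m
  set K := L - m with hK
  have hKcast : (K:ℝ) = (L:ℝ) - m := by
    rw [hK]; push_cast [Nat.cast_sub hmL]; ring
  set x : ℝ := 2 * m / L with hx
  have hx0 : 0 ≤ x := by positivity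
  have hx1 : x ≤ 1 := by rw [hx, div_le_one hLpos]; linarith
  have hxm : (m:ℝ) ≤ x * K := by
    rw [hx, div_mul_eq_mul_div, le_div_iff₀ hLpos, hKcast]
    nlinarith
  have hLK : (L:ℝ) ≤ (1+x) * K := by
    rw [hKcast] at hxm ⊢; nlinarith
  have hmain := aux_choose17 K L x hx0 hLK n
  have hpow := aux_pow17 n x hx0 hx1
  set B : ℝ := (Nat.choose (K + n) n : ℝ) with hB
  have hBpos : (0:ℝ) < B := by
    rw [hB]
    exact_mod_cast Nat.choose_pos (by omega : n ≤ K + n)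
  have hA : (Nat.choose (L + n) n : ℝ) ≤ (1 + (2^n - 1) * x) * B := by
    calc (Nat.choose (L + n) n : ℝ) ≤ (1+x)^n * B := hmain
      _ ≤ (1 + (2^n - 1) * x) * B := mul_le_mul_of_nonneg_right hpow hBpos.le
  rw [div_le_div_iff₀ hBpos hLpos]
  have h2n : (1:ℝ) ≤ 2 ^ n := one_le_pow₀ (by norm_num)
  have hnum : ((2:ℝ)^n - 1) * (2 * m) ≤ 2^(n+1) * m := by
    have h3 : (2:ℝ)^(n+1) = 2 * 2^n := by ring
    nlinarith [hmR.le]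
  have hexp : ((2:ℝ)^n - 1) * x ≤ 2^(n+1) * m / L := by
    calc ((2:ℝ)^n - 1) * x = ((2^n - 1) * (2 * m)) / L := by rw [hx]; ring
      _ ≤ 2^(n+1) * m / L := by gcongr
  have : ((Nat.choose (L + n) n : ℝ) - B) ≤ (2^(n+1) * m / L) * B := by
    nlinarith [mul_le_mul_of_nonneg_right hexp hBpos.le]
  calc ((Nat.choose (L + n) n : ℝ) - B) * L ≤ ((2^(n+1) * m / L) * B) * L := by
        exact mul_le_mul_of_nonneg_right this hLpos.le
    _ = 2 ^ (n+1) * m * B := by field_simp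
    _ = 2 ^ (n + 1) * ↑Ω * ↑T * B := by push_cast [hm]; try ring
end
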